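/- The genus-one condition of an enhanced twin Frobenius algebra holds with a minus sign for the algebra (A_C, A_W, z₁, z₁*, z₂, z₂*): for k = 1, 2 and every x ∈ A, z_k(m(Δ_C(z_k*(x)))) = −m(Δ_W(x)); that is, −z_k ∘ m ∘ Δ_C ∘ z_k* = m ∘ Δ_W as R-linear endomorphisms of A. -/

import Mathlib

/-!
Multiplication after `Δ_C` is multiplication by the handle element `ω = 2X - h`, and `z₂` is the
conjugation `X ↦ h - X` of `A`, which sends `ω` to `-ω`. Since `z₁* = -i` and `z₂* = i z₂`, both
identities reduce to `z_k (ω · z_k* x) = -i ω x`; linear maps out of `A` are compared on `1, X`.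
-/

open TensorProduct Polynomial

noncomputable section

variable {R : Type*} [CommRing R]

/-- The algebra `A = R[X]/(X² - h·X - a)`. -/
abbrev FrobA (a h : R) : Type _ := AdjoinRoot (X ^ 2 - C h * X - C a)

/-- The image of the variable `X` in `A`. -/
abbrev FrobX (a h : R) : FrobA a h := AdjoinRoot.root _

theorem AdjoinRoot.linearMap_ext_of_natDegree_le_two {g : R[X]} (hg : g.Monic)
    (hdeg : g.natDegree ≤ 2) {M : Type*} [AddCommGroup M] [Module R M]
    {f₁ f₂ : AdjoinRoot g →ₗ[R] M} (h₁ : f₁ 1 = f₂ 1) (hroot : f₁ (root g) = f₂ (root g)) :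
    f₁ = f₂ := by
  refine (powerBasis' hg).basis.ext fun k => ?_
  rw [PowerBasis.basis_eq_pow, powerBasis'_gen]
  have hk : (k : ℕ) < 2 := k.isLt.trans_le hdeg
  interval_cases (k : ℕ)
  · simpa using h₁
  · simpa using hroot

theorem monic_X_sq_sub_C_mul_X_sub_C (a h : R) : (X ^ 2 - C h * X - C a : R[X]).Monic := by
  rw [sub_sub]
  exact monic_X_pow_sub (by compute_degree!)

theorem natDegree_X_sq_sub_C_mul_X_sub_C_le (a h : R) :
    (X ^ 2 - C h * X - C a : R[X]).natDegree ≤ 2 := by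
  compute_degree!

theorem FrobA.linearMap_ext {a h : R} {M : Type*} [AddCommGroup M] [Module R M]
    {f₁ f₂ : FrobA a h →ₗ[R] M} (h₁ : f₁ 1 = f₂ 1) (hX : f₁ (FrobX a h) = f₂ (FrobX a h)) :
    f₁ = f₂ :=
  AdjoinRoot.linearMap_ext_of_natDegree_le_two (monic_X_sq_sub_C_mul_X_sub_C a h)
    (natDegree_X_sq_sub_C_mul_X_sub_C_le a h) h₁ hX

theorem FrobX_mul_self (a h : R) : FrobX a h * FrobX a h = h • FrobX a h + a • 1 := by
  have hrel := AdjoinRoot.eval₂_root (X ^ 2 - C h * X - C a)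
  simp only [eval₂_sub, eval₂_mul, eval₂_X_pow, eval₂_C, eval₂_X,
    ← AdjoinRoot.algebraMap_eq] at hrel
  rw [Algebra.smul_def, Algebra.smul_def, mul_one]
  linear_combination hrel

def handleElement (a h : R) : FrobA a h := (2 : R) • FrobX a h - h • 1

theorem mul'_apply_eq_handleElement_mul {a h : R}
    (ΔC : FrobA a h →ₗ[R] FrobA a h ⊗[R] FrobA a h)
    (hΔ1 : ΔC 1 = (1 : FrobA a h) ⊗ₜ[R] FrobX a h + FrobX a h ⊗ₜ[R] (1 : FrobA a h)
      - h • ((1 : FrobA a h) ⊗ₜ[R] (1 : FrobA a h)))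
    (hΔX : ΔC (FrobX a h) = FrobX a h ⊗ₜ[R] FrobX a h
      + a • ((1 : FrobA a h) ⊗ₜ[R] (1 : FrobA a h))) (x : FrobA a h) :
    LinearMap.mul' R (FrobA a h) (ΔC x) = handleElement a h * x := by
  refine LinearMap.congr_fun (f := LinearMap.mul' R (FrobA a h) ∘ₗ ΔC)
    (g := LinearMap.mulLeft R (handleElement a h)) (FrobA.linearMap_ext ?_ ?_) x
  · simp only [handleElement, LinearMap.comp_apply, LinearMap.mulLeft_apply, hΔ1, map_add,
      map_sub, map_smul, LinearMap.mul'_apply, mul_one, one_mul]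
    module
  · simp only [handleElement, LinearMap.comp_apply, LinearMap.mulLeft_apply, hΔX, map_add,
      map_smul, LinearMap.mul'_apply, sub_mul, smul_mul_assoc, FrobX_mul_self, one_mul]
    module

theorem conj_handleElement_mul {a h : R} (z : FrobA a h →ₗ[R] FrobA a h) (hz1 : z 1 = 1)
    (hzX : z (FrobX a h) = algebraMap R (FrobA a h) h - FrobX a h) (y : FrobA a h) :
    z (handleElement a h * z y) = -(handleElement a h * y) := by
  rw [Algebra.algebraMap_eq_smul_one] at hzX
  refine LinearMap.congr_fun (f := z ∘ₗ LinearMap.mulLeft R (handleElement a h) ∘ₗ z)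
    (g := -LinearMap.mulLeft R (handleElement a h)) (FrobA.linearMap_ext ?_ ?_) y
  · simp only [handleElement, LinearMap.comp_apply, LinearMap.mulLeft_apply, LinearMap.neg_apply,
      hz1, hzX, mul_one, map_sub, map_smul]
    module
  · simp only [handleElement, LinearMap.comp_apply, LinearMap.mulLeft_apply, LinearMap.neg_apply,
      hz1, hzX, sub_mul, smul_mul_assoc, FrobX_mul_self, map_sub, map_smul, map_add, one_mul,
      mul_one]
    module

theorem genus_one_minus_sign_general (a h i : R)
    (ΔC : FrobA a h →ₗ[R] FrobA a h ⊗[R] FrobA a h)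
    (hΔ1 : ΔC 1 = (1 : FrobA a h) ⊗ₜ[R] FrobX a h + FrobX a h ⊗ₜ[R] (1 : FrobA a h)
      - h • ((1 : FrobA a h) ⊗ₜ[R] (1 : FrobA a h)))
    (hΔX : ΔC (FrobX a h) = FrobX a h ⊗ₜ[R] FrobX a h
      + a • ((1 : FrobA a h) ⊗ₜ[R] (1 : FrobA a h)))
    (z1 z1s z2 z2s : FrobA a h →ₗ[R] FrobA a h)
    (hz1 : z1 = LinearMap.id)
    (hz1s : ∀ x : FrobA a h, z1s x = (-i) • x)
    (hz21 : z2 1 = 1)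
    (hz2X : z2 (FrobX a h) = algebraMap R (FrobA a h) h - FrobX a h)
    (hz2s1 : z2s 1 = i • (1 : FrobA a h))
    (hz2sX : z2s (FrobX a h) = i • (algebraMap R (FrobA a h) h - FrobX a h)) :
    (∀ x : FrobA a h,
      z1 (LinearMap.mul' R (FrobA a h) (ΔC (z1s x))) =
        -(LinearMap.mul' R (FrobA a h) ((i • ΔC) x))) ∧
    (∀ x : FrobA a h,
      z2 (LinearMap.mul' R (FrobA a h) (ΔC (z2s x))) =
        -(LinearMap.mul' R (FrobA a h) ((i • ΔC) x))) := by
  refine ⟨fun x => by simp [hz1, hz1s], fun x => ?_⟩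
  have hz2s : z2s = i • z2 := FrobA.linearMap_ext (by simp [hz2s1, hz21]) (by simp [hz2sX, hz2X])
  simp only [hz2s, LinearMap.smul_apply, map_smul, mul'_apply_eq_handleElement_mul ΔC hΔ1 hΔX,
    conj_handleElement_mul z2 hz21 hz2X, smul_neg]

/-- the genus-one condition holds with a minus sign:
`z_k(m(Δ_C(z_k*(x)))) = -m(Δ_W(x))` for `k = 1, 2`, where `Δ_W = i•Δ_C`. -/
theorem genus_one_minus_sign (a h i : R) (hi : i ^ 2 = -1)
    (ΔC : FrobA a h →ₗ[R] FrobA a h ⊗[R] FrobA a h)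
    (hΔ1 : ΔC 1 = (1 : FrobA a h) ⊗ₜ[R] FrobX a h + FrobX a h ⊗ₜ[R] (1 : FrobA a h)
      - h • ((1 : FrobA a h) ⊗ₜ[R] (1 : FrobA a h)))
    (hΔX : ΔC (FrobX a h) = FrobX a h ⊗ₜ[R] FrobX a h
      + a • ((1 : FrobA a h) ⊗ₜ[R] (1 : FrobA a h)))
    (z1 z1s z2 z2s : FrobA a h →ₗ[R] FrobA a h)
    (hz1 : z1 = LinearMap.id)
    (hz1s : ∀ x : FrobA a h, z1s x = (-i) • x)
    (hz21 : z2 1 = 1)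
    (hz2X : z2 (FrobX a h) = algebraMap R (FrobA a h) h - FrobX a h)
    (hz2s1 : z2s 1 = i • (1 : FrobA a h))
    (hz2sX : z2s (FrobX a h) = i • (algebraMap R (FrobA a h) h - FrobX a h)) :
    (∀ x : FrobA a h,
      z1 (LinearMap.mul' R (FrobA a h) (ΔC (z1s x))) =
        -(LinearMap.mul' R (FrobA a h) ((i • ΔC) x))) ∧
    (∀ x : FrobA a h,
      z2 (LinearMap.mul' R (FrobA a h) (ΔC (z2s x))) =
        -(LinearMap.mul' R (FrobA a h) ((i • ΔC) x))) :=
  genus_one_minus_sign_general a h i ΔC hΔ1 hΔX z1 z1s z2 z2s hz1 hz1s hz21 hz2X hz2s1 hz2sX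

end
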